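/- Lowering spent foci: the rule ⇑⁻¹ is admissible in LLM, i.e. for every persistent context Θ, every spent context Σ, and every positive formula P, if the focused sequent ⊨ Θ : Σ,[P] is derivable in LLM, then the focused sequent ⊨ Θ : ⌊Σ⌋,[P] is derivable in LLM. -/
import Mathlib


mutual
inductive PForm (α : Type) : Type
  | atom  : α → PForm α
  | one   : PForm α
  | tens  : PForm α → PForm α → PForm α
  | zero  : PForm α
  | plus  : PForm α → PForm α → PForm α
  | bang  : NForm α → PForm α
  | up    : NForm α → PForm α

inductive NForm (α : Type) : Type
  | natom : α → NForm α
  | bot   : NForm α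
  | parr  : NForm α → NForm α → NForm α
  | top   : NForm α
  | wth   : NForm α → NForm α → NForm α
  | quest : PForm α → NForm α
  | down  : PForm α → NForm α
end

mutual
def PForm.dual {α : Type} : PForm α → NForm α
  | .atom a   => .natom a
  | .one      => .bot
  | .tens P Q => .parr P.dual Q.dual
  | .zero     => .top
  | .plus P Q => .wth P.dual Q.dual
  | .bang N   => .quest N.dual
  | .up N     => .down N.dual

def NForm.dual {α : Type} : NForm α → PForm α
  | .natom a  => .atom a
  | .bot      => .one
  | .parr N M => .tens N.dual M.dual
  | .top      => .zero
  | .wth N M  => .plus N.dual M.dual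
  | .quest P  => .bang P.dual
  | .down P   => .up P.dual
end

/-- Items of a focused context: negative formulas or foci `[P]`. -/
inductive FItem (α : Type) : Type
  | neg : NForm α → FItem α
  | foc : PForm α → FItem α

/-- Sequents of LLM: inversion sequents `⊢ Θ : Γ` and focusing sequents `⊨ Θ : Ψ`. -/
inductive LLMSeq (α : Type) : Type
  | inv : Multiset (PForm α) → Multiset (NForm α) → LLMSeq α
  | foc : Multiset (PForm α) → Multiset (FItem α) → LLMSeq α

/-- A multiset of negatives seen as a focused context. -/
def negCtx {α : Type} (Γ : Multiset (NForm α)) : Multiset (FItem α) :=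
  Γ.map FItem.neg

/-- A multiset of positives seen as a focused context entirely made of foci. -/
def focCtx {α : Type} (Θ : Multiset (PForm α)) : Multiset (FItem α) :=
  Θ.map FItem.foc

/-- The rules of the multifocused sequent calculus LLM. -/
inductive LLM {α : Type} : LLMSeq α → Prop
  | ax (Θ : Multiset (PForm α)) (a : α) :
      LLM (.foc Θ {FItem.neg (.natom a), FItem.foc (.atom a)})
  | one (Θ : Multiset (PForm α)) :
      LLM (.foc Θ {FItem.foc .one})
  | tens {Θ : Multiset (PForm α)} {Ψ Ξ : Multiset (FItem α)} {P Q : PForm α} :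
      LLM (.foc Θ (FItem.foc P ::ₘ Ψ)) → LLM (.foc Θ (FItem.foc Q ::ₘ Ξ)) →
      LLM (.foc Θ (FItem.foc (P.tens Q) ::ₘ (Ψ + Ξ)))
  | plusL {Θ : Multiset (PForm α)} {Ψ : Multiset (FItem α)} {P : PForm α} (Q : PForm α) :
      LLM (.foc Θ (FItem.foc P ::ₘ Ψ)) → LLM (.foc Θ (FItem.foc (P.plus Q) ::ₘ Ψ))
  | plusR {Θ : Multiset (PForm α)} {Ψ : Multiset (FItem α)} {Q : PForm α} (P : PForm α) :
      LLM (.foc Θ (FItem.foc Q ::ₘ Ψ)) → LLM (.foc Θ (FItem.foc (P.plus Q) ::ₘ Ψ))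
  | bang {Θ : Multiset (PForm α)} {N : NForm α} :
      LLM (.inv Θ {N}) → LLM (.foc Θ {FItem.foc (.bang N)})
  | up {Θ : Multiset (PForm α)} {Γ : Multiset (NForm α)} (Δ : Multiset (NForm α))
      (hΔ : Δ ≠ 0) :
      LLM (.inv Θ (Γ + Δ)) →
      LLM (.foc Θ (negCtx Γ + Δ.map (fun N => FItem.foc (.up N))))
  | down {Θ : Multiset (PForm α)} {Γ : Multiset (NForm α)} (Θn Θ' : Multiset (PForm α))
      (hcopy : ∀ P ∈ Θn, P ∈ Θ) (hne : Θn ≠ 0 ∨ Θ' ≠ 0) :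
      LLM (.foc Θ (focCtx Θn + negCtx Γ + focCtx Θ')) →
      LLM (.inv Θ (Γ + Θ'.map NForm.down))
  | bot {Θ : Multiset (PForm α)} {Γ : Multiset (NForm α)} :
      LLM (.inv Θ Γ) → LLM (.inv Θ (NForm.bot ::ₘ Γ))
  | parr {Θ : Multiset (PForm α)} {Γ : Multiset (NForm α)} {N M : NForm α} :
      LLM (.inv Θ (N ::ₘ M ::ₘ Γ)) → LLM (.inv Θ (NForm.parr N M ::ₘ Γ))
  | top (Θ : Multiset (PForm α)) (Γ : Multiset (NForm α)) :
      LLM (.inv Θ (NForm.top ::ₘ Γ))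
  | wth {Θ : Multiset (PForm α)} {Γ : Multiset (NForm α)} {N M : NForm α} :
      LLM (.inv Θ (N ::ₘ Γ)) → LLM (.inv Θ (M ::ₘ Γ)) →
      LLM (.inv Θ (NForm.wth N M ::ₘ Γ))
  | quest {Θ : Multiset (PForm α)} {Γ : Multiset (NForm α)} {P : PForm α} :
      LLM (.inv (P ::ₘ Θ) Γ) → LLM (.inv Θ (NForm.quest P ::ₘ Γ))


section LoweringAux
variable {α : Type}

private def hfun : NForm α ⊕ NForm α → FItem α :=
  Sum.elim FItem.neg (fun N => FItem.foc (.up N))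

private def lo : NForm α ⊕ NForm α → NForm α := Sum.elim id id

private lemma hfun_inj : Function.Injective (hfun (α := α)) := by
  rintro (x|x) (y|y) h <;> simp [hfun] at h <;> simp [h]

private lemma map_split {β γ : Type*} {f : β → γ} :
    ∀ (S : Multiset β) (Ψ Ξ : Multiset γ), S.map f = Ψ + Ξ →
      ∃ S₁ S₂, S = S₁ + S₂ ∧ Ψ = S₁.map f ∧ Ξ = S₂.map f := by
  intro S
  induction S using Multiset.induction with
  | empty =>
      intro Ψ Ξ h
      simp only [Multiset.map_zero] at h
      obtain ⟨h1, h2⟩ := add_eq_zero.1 h.symm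
      exact ⟨0, 0, by simp, by simp [h1], by simp [h2]⟩
  | cons a S ih =>
      intro Ψ Ξ h
      have hmem : f a ∈ Ψ + Ξ := by rw [← h]; simp
      rcases Multiset.mem_add.1 hmem with hΨ | hΞ
      · obtain ⟨Ψ', rfl⟩ := Multiset.exists_cons_of_mem hΨ
        rw [Multiset.map_cons, Multiset.cons_add, Multiset.cons_inj_right] at h
        obtain ⟨S₁, S₂, rfl, rfl, rfl⟩ := ih _ _ h
        exact ⟨a ::ₘ S₁, S₂, by simp [Multiset.cons_add], by simp, rfl⟩
      · obtain ⟨Ξ', rfl⟩ := Multiset.exists_cons_of_mem hΞ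
        rw [Multiset.map_cons, Multiset.add_cons, Multiset.cons_inj_right] at h
        obtain ⟨S₁, S₂, rfl, rfl, rfl⟩ := ih _ _ h
        exact ⟨S₁, a ::ₘ S₂, by simp [Multiset.add_cons], rfl, by simp⟩

private lemma hfun_decomp (Γ Δ : Multiset (NForm α)) :
    (Γ.map Sum.inl + Δ.map Sum.inr).map hfun
      = negCtx Γ + Δ.map (fun N => FItem.foc (.up N)) := by
  simp [hfun, negCtx, Multiset.map_map, Function.comp]

private lemma lo_decomp (Γ Δ : Multiset (NForm α)) :
    (Γ.map Sum.inl + Δ.map Sum.inr).map lo = Γ + Δ := by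
  simp [lo, Multiset.map_map, Function.comp]

private lemma not_foc_mem_hfun {S : Multiset (NForm α ⊕ NForm α)} {P : PForm α}
    (hP : ∀ N, P ≠ .up N) : FItem.foc P ∉ S.map hfun := by
  intro hmem
  rcases Multiset.mem_map.1 hmem with ⟨y, -, hy⟩
  rcases y with N | N
  · simp [hfun] at hy
  · simp [hfun] at hy
    exact hP N hy.symm

private lemma lowering_main {s : LLMSeq α} (h : LLM s) :
    ∀ (Θ : Multiset (PForm α)) (S : Multiset (NForm α ⊕ NForm α)) (P : PForm α),
      s = .foc Θ (FItem.foc P ::ₘ S.map hfun) →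
      LLM (.foc Θ (FItem.foc P ::ₘ negCtx (S.map lo))) := by
  induction h with
  | ax Θ a =>
      intro Θx S P heq
      injection heq with h1 h2; subst h1
      have h2 : FItem.neg (.natom a) ::ₘ ({FItem.foc (.atom a)} : Multiset _)
          = FItem.foc P ::ₘ S.map hfun := h2
      rcases Multiset.cons_eq_cons.1 h2 with ⟨hne, -⟩ | ⟨-, cs, hcs1, hcs2⟩
      · exact absurd hne (by simp)
      · rcases Multiset.cons_eq_cons.1 hcs1 with ⟨hPe, hcs⟩ | ⟨-, ds, hds, -⟩
        · injection hPe with hPe; subst hPe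
          subst hcs
          have hS : S.map hfun = {FItem.neg (.natom a)} := by simpa using hcs2
          obtain ⟨x, rfl, hx⟩ := Multiset.map_eq_singleton.1 hS
          rcases x with N | N
          · simp only [hfun, Sum.elim_inl] at hx
            injection hx with hx; subst hx
            have hctx : negCtx (Multiset.map lo
                ({Sum.inl (NForm.natom a)} : Multiset (NForm α ⊕ NForm α)))
                = {FItem.neg (NForm.natom a)} := by simp [negCtx, lo]
            rw [hctx]
            have hsw : (FItem.foc (PForm.atom a) ::ₘ {FItem.neg (NForm.natom a)} :
                Multiset (FItem α)) = FItem.neg (NForm.natom a) ::ₘ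
                {FItem.foc (PForm.atom a)} := Multiset.cons_swap _ _ _
            rw [hsw]
            exact LLM.ax Θ a
          · simp [hfun] at hx
        · exact absurd hds (by simp)
  | one Θ =>
      intro Θx S P heq
      injection heq with h1 h2; subst h1
      have h2 : FItem.foc PForm.one ::ₘ (0 : Multiset _)
          = FItem.foc P ::ₘ S.map hfun := h2
      rcases Multiset.cons_eq_cons.1 h2 with ⟨hPe, hS⟩ | ⟨-, cs, hcs, -⟩
      · injection hPe with hPe; subst hPe
        have : S = 0 := Multiset.map_eq_zero.1 hS.symm
        subst this
        simpa [negCtx] using LLM.one Θ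
      · exact absurd hcs (by simp)
  | tens hP hQ ihP ihQ =>
      rename_i Θ Ψ Ξ P₁ P₂
      intro Θx S P heq
      injection heq with h1 h2; subst h1
      rcases Multiset.cons_eq_cons.1 h2 with ⟨hPe, hS⟩ | ⟨-, cs, -, hcs2⟩
      · injection hPe with hPe; subst hPe
        obtain ⟨S₁, S₂, rfl, rfl, rfl⟩ := map_split S Ψ Ξ hS.symm
        have d₁ := ihP Θ S₁ P₁ rfl
        have d₂ := ihQ Θ S₂ P₂ rfl
        have := LLM.tens d₁ d₂
        simpa [negCtx] using this
      · exfalso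
        apply not_foc_mem_hfun (P := P₁.tens P₂) (by intro N h; cases h)
        rw [hcs2]; simp
  | plusL Q hder ih =>
      rename_i Θ Ψ P₁
      intro Θx S P heq
      injection heq with h1 h2; subst h1
      rcases Multiset.cons_eq_cons.1 h2 with ⟨hPe, hS⟩ | ⟨-, cs, -, hcs2⟩
      · injection hPe with hPe; subst hPe
        exact LLM.plusL Q (ih Θ S P₁ (by rw [hS]))
      · exfalso
        apply not_foc_mem_hfun (P := P₁.plus Q) (by intro N h; cases h)
        rw [hcs2]; simp
  | plusR Q hder ih =>
      rename_i Θ Ψ P₂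
      intro Θx S P heq
      injection heq with h1 h2; subst h1
      rcases Multiset.cons_eq_cons.1 h2 with ⟨hPe, hS⟩ | ⟨-, cs, -, hcs2⟩
      · injection hPe with hPe; subst hPe
        exact LLM.plusR Q (ih Θ S P₂ (by rw [hS]))
      · exfalso
        apply not_foc_mem_hfun (P := Q.plus P₂) (by intro N h; cases h)
        rw [hcs2]; simp
  | bang hder ih =>
      rename_i Θ N
      intro Θx S P heq
      injection heq with h1 h2; subst h1
      have h2 : FItem.foc (PForm.bang N) ::ₘ (0 : Multiset _)
          = FItem.foc P ::ₘ S.map hfun := h2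
      rcases Multiset.cons_eq_cons.1 h2 with ⟨hPe, hS⟩ | ⟨-, cs, hcs, -⟩
      · injection hPe with hPe; subst hPe
        have : S = 0 := Multiset.map_eq_zero.1 hS.symm
        subst this
        simpa [negCtx] using LLM.bang hder
      · exact absurd hcs (by simp)
  | up Δ hΔ hder ih =>
      rename_i Θ Γ
      intro Θx S P heq
      injection heq with h1 h2; subst h1
      have hmem : FItem.foc P ∈ negCtx Γ + Δ.map (fun N => FItem.foc (.up N)) := by
        rw [h2]; simp
      rcases Multiset.mem_add.1 hmem with hg | hd
      · rcases Multiset.mem_map.1 hg with ⟨N, -, hN⟩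
        cases hN
      · rcases Multiset.mem_map.1 hd with ⟨N₀, hN₀, hN⟩
        injection hN with hN; subst hN
        obtain ⟨Δ'', rfl⟩ := Multiset.exists_cons_of_mem hN₀
        rw [Multiset.map_cons, Multiset.add_cons, Multiset.cons_inj_right] at h2
        have hS : S.map hfun = (Γ.map Sum.inl + Δ''.map Sum.inr).map hfun := by
          rw [hfun_decomp]; exact h2.symm
        have hSe : S = Γ.map Sum.inl + Δ''.map Sum.inr :=
          Multiset.map_injective hfun_inj hS
        subst hSe
        rw [lo_decomp]
        have hprem : LLM (.inv Θ ((Γ + Δ'') + ({N₀} : Multiset (NForm α)))) := by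
          have : (Γ + Δ'') + ({N₀} : Multiset (NForm α)) = Γ + (N₀ ::ₘ Δ'') := by
            rw [add_assoc, add_comm Δ'' ({N₀} : Multiset (NForm α)),
              Multiset.singleton_add]
          rw [this]; exact hder
        have := LLM.up (Θ := Θ) (Γ := Γ + Δ'') {N₀} (by simp) hprem
        have h3 : negCtx (Γ + Δ'') +
            ({N₀} : Multiset (NForm α)).map (fun N => FItem.foc (.up N)) =
            FItem.foc (PForm.up N₀) ::ₘ negCtx (Γ + Δ'') := by
          rw [Multiset.map_singleton, add_comm, Multiset.singleton_add]
        rw [h3] at this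
        exact this
  | down Θn Θb hcopy hne hder ih => intro Θx S P heq; exact absurd heq (by simp)
  | bot hder ih => intro Θx S P heq; exact absurd heq (by simp)
  | parr hder ih => intro Θx S P heq; exact absurd heq (by simp)
  | top Θ Γ => intro Θx S P heq; exact absurd heq (by simp)
  | wth h1 h2 ih1 ih2 => intro Θx S P heq; exact absurd heq (by simp)
  | quest hder ih => intro Θx S P heq; exact absurd heq (by simp)

end LoweringAux

/-- Lowering spent foci: admissibility of the rule `⇑⁻¹`.  A spent context is
written as `negCtx Γ₀ + Δ.map (fun N => FItem.foc (.up N))`, i.e. negatives `Γ₀`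
together with spent foci `[⇑N]` for `N ∈ Δ`; its lowering is `Γ₀ + Δ`. -/

theorem lowering_spent_foci_admissible {α : Type} (Θ : Multiset (PForm α))
    (Γ₀ Δ : Multiset (NForm α)) (P : PForm α)
    (h : LLM (.foc Θ (FItem.foc P ::ₘ (negCtx Γ₀ + Δ.map (fun N => FItem.foc (.up N)))))) :
    LLM (.foc Θ (FItem.foc P ::ₘ negCtx (Γ₀ + Δ))) := by
  have := lowering_main h Θ (Γ₀.map Sum.inl + Δ.map Sum.inr) P
    (by rw [hfun_decomp])
  rwa [lo_decomp] at this
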